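/- Under the eigen-equation (1/(NT))XXᵀF̃ = F̃D² with F̃ᵀF̃ = T·I_r and X = F⁰Λ⁰ᵀ + e, and with H̄ defined by H̄ := (B^{-1}(Λ⁰ᵀΛ⁰)(F⁰ᵀF̃B^{-1}/T) + B^{-1}Λ⁰ᵀeᵀF̃B^{-1}/T)(N B^{-2} D²)^{-1} for an invertible diagonal matrix B, the exact identity F̃B − F⁰BH̄ = (eΛ⁰F⁰ᵀF̃B^{-1}/T)(N B^{-2}D²)^{-1} + (e eᵀF̃B^{-1}/T)(N B^{-2}D²)^{-1} holds. -/
import Mathlib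


open Matrix

theorem stmt_19 {T N r : ℕ} (hN : 0 < N) (hT : 0 < T)
    (X e : Matrix (Fin T) (Fin N) ℝ) (F0 Ftil : Matrix (Fin T) (Fin r) ℝ)
    (Λ0 : Matrix (Fin N) (Fin r) ℝ) (D2 : Matrix (Fin r) (Fin r) ℝ) (b : Fin r → ℝ)
    (B : Matrix (Fin r) (Fin r) ℝ) (hB : B = Matrix.diagonal b) (hBinv : IsUnit B.det)
    (hX : X = F0 * Λ0ᵀ + e)
    (hnorm : Ftilᵀ * Ftil = (T : ℝ) • (1 : Matrix (Fin r) (Fin r) ℝ))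
    (heig : ((N * T : ℝ)⁻¹) • (X * Xᵀ) * Ftil = Ftil * D2)
    (hdiag : D2.IsDiag)
    (hInv : IsUnit ((N : ℝ) • (B⁻¹ * B⁻¹ * D2)).det) :
    Ftil * B - F0 * B *
        ((B⁻¹ * (Λ0ᵀ * Λ0) * ((T : ℝ)⁻¹ • (F0ᵀ * Ftil * B⁻¹))
            + (T : ℝ)⁻¹ • (B⁻¹ * Λ0ᵀ * eᵀ * Ftil * B⁻¹))
          * ((N : ℝ) • (B⁻¹ * B⁻¹ * D2))⁻¹) =
      ((T : ℝ)⁻¹ • (e * Λ0 * F0ᵀ * Ftil * B⁻¹)) * ((N : ℝ) • (B⁻¹ * B⁻¹ * D2))⁻¹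
        + ((T : ℝ)⁻¹ • (e * eᵀ * Ftil * B⁻¹)) * ((N : ℝ) • (B⁻¹ * B⁻¹ * D2))⁻¹ := by
  set K : Matrix (Fin r) (Fin r) ℝ := (N : ℝ) • (B⁻¹ * B⁻¹ * D2) with hK
  have hN' : (N : ℝ) ≠ 0 := Nat.cast_ne_zero.mpr hN.ne'
  have hT' : (T : ℝ) ≠ 0 := Nat.cast_ne_zero.mpr hT.ne'
  -- commutation of D2 with B⁻¹
  have hcomm : D2 * B⁻¹ = B⁻¹ * D2 := by
    have h1 : B⁻¹ = Matrix.diagonal (Ring.inverse b) := by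
      rw [hB, Matrix.inv_diagonal]
    rw [h1, ← hdiag.diagonal_diag, Matrix.diagonal_mul_diagonal,
      Matrix.diagonal_mul_diagonal]
    exact congrArg Matrix.diagonal (funext fun i => mul_comm _ _)
  have hBB : B * B⁻¹ = 1 := Matrix.mul_nonsing_inv B hBinv
  -- it suffices to prove the identity multiplied by K on the right
  have key : (Ftil * B - F0 * B *
        ((B⁻¹ * (Λ0ᵀ * Λ0) * ((T : ℝ)⁻¹ • (F0ᵀ * Ftil * B⁻¹))
            + (T : ℝ)⁻¹ • (B⁻¹ * Λ0ᵀ * eᵀ * Ftil * B⁻¹)) * K⁻¹)) * K =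
      (((T : ℝ)⁻¹ • (e * Λ0 * F0ᵀ * Ftil * B⁻¹)) * K⁻¹
        + ((T : ℝ)⁻¹ • (e * eᵀ * Ftil * B⁻¹)) * K⁻¹) * K := by
    have hFtilBK : Ftil * B * K = (T : ℝ)⁻¹ • (X * Xᵀ * Ftil * B⁻¹) := by
      have h1 : Ftil * B * K = (N : ℝ) • (Ftil * D2 * B⁻¹) := by
        rw [hK, Matrix.mul_smul]
        congr 1
        calc Ftil * B * (B⁻¹ * B⁻¹ * D2)
            = Ftil * (B * B⁻¹) * (B⁻¹ * D2) := by
              simp only [Matrix.mul_assoc]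
          _ = Ftil * (B⁻¹ * D2) := by rw [hBB, Matrix.mul_one]
          _ = Ftil * D2 * B⁻¹ := by rw [← hcomm, Matrix.mul_assoc]
      rw [h1, ← heig, Matrix.smul_mul, Matrix.smul_mul, smul_smul]
      congr 1
      field_simp
    rw [Matrix.sub_mul, hFtilBK]
    rw [Matrix.mul_assoc (F0 * B), Matrix.nonsing_inv_mul_cancel_right _ _ hInv, Matrix.add_mul, Matrix.nonsing_inv_mul_cancel_right _ _ hInv, Matrix.nonsing_inv_mul_cancel_right _ _ hInv]
    subst hX
    have hTr : (F0 * Λ0ᵀ + e)ᵀ = Λ0 * F0ᵀ + eᵀ := by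
      rw [Matrix.transpose_add, Matrix.transpose_mul, Matrix.transpose_transpose]
    rw [hTr]
    have hexp : (F0 * Λ0ᵀ + e) * (Λ0 * F0ᵀ + eᵀ) * Ftil * B⁻¹ =
        F0 * Λ0ᵀ * Λ0 * F0ᵀ * Ftil * B⁻¹ + F0 * Λ0ᵀ * eᵀ * Ftil * B⁻¹
          + e * Λ0 * F0ᵀ * Ftil * B⁻¹ + e * eᵀ * Ftil * B⁻¹ := by
      simp only [Matrix.add_mul, Matrix.mul_add, Matrix.mul_assoc]
      abel
    rw [hexp]
    have hF0B : F0 * B * (B⁻¹ * (Λ0ᵀ * Λ0) * ((T : ℝ)⁻¹ • (F0ᵀ * Ftil * B⁻¹))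
            + (T : ℝ)⁻¹ • (B⁻¹ * Λ0ᵀ * eᵀ * Ftil * B⁻¹)) =
        (T : ℝ)⁻¹ • (F0 * Λ0ᵀ * Λ0 * F0ᵀ * Ftil * B⁻¹)
          + (T : ℝ)⁻¹ • (F0 * Λ0ᵀ * eᵀ * Ftil * B⁻¹) := by
      rw [Matrix.mul_add]
      congr 1
      · rw [Matrix.mul_smul, Matrix.mul_smul]
        congr 1
        calc F0 * B * (B⁻¹ * (Λ0ᵀ * Λ0) * (F0ᵀ * Ftil * B⁻¹))
            = F0 * (B * B⁻¹) * ((Λ0ᵀ * Λ0) * (F0ᵀ * Ftil * B⁻¹)) := by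
              simp only [Matrix.mul_assoc]
          _ = F0 * Λ0ᵀ * Λ0 * F0ᵀ * Ftil * B⁻¹ := by
              rw [hBB, Matrix.mul_one]; simp only [Matrix.mul_assoc]
      · rw [Matrix.mul_smul]
        congr 1
        calc F0 * B * (B⁻¹ * Λ0ᵀ * eᵀ * Ftil * B⁻¹)
            = F0 * (B * B⁻¹) * (Λ0ᵀ * (eᵀ * (Ftil * B⁻¹))) := by
              simp only [Matrix.mul_assoc]
          _ = F0 * Λ0ᵀ * eᵀ * Ftil * B⁻¹ := by
              rw [hBB, Matrix.mul_one]; simp only [Matrix.mul_assoc]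
    rw [hF0B]
    simp only [smul_add]
    abel
  calc Ftil * B - F0 * B *
        ((B⁻¹ * (Λ0ᵀ * Λ0) * ((T : ℝ)⁻¹ • (F0ᵀ * Ftil * B⁻¹))
            + (T : ℝ)⁻¹ • (B⁻¹ * Λ0ᵀ * eᵀ * Ftil * B⁻¹)) * K⁻¹)
      = (Ftil * B - F0 * B *
        ((B⁻¹ * (Λ0ᵀ * Λ0) * ((T : ℝ)⁻¹ • (F0ᵀ * Ftil * B⁻¹))
            + (T : ℝ)⁻¹ • (B⁻¹ * Λ0ᵀ * eᵀ * Ftil * B⁻¹)) * K⁻¹)) * K * K⁻¹ := by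
        rw [Matrix.mul_nonsing_inv_cancel_right _ _ hInv]
    _ = (((T : ℝ)⁻¹ • (e * Λ0 * F0ᵀ * Ftil * B⁻¹)) * K⁻¹
        + ((T : ℝ)⁻¹ • (e * eᵀ * Ftil * B⁻¹)) * K⁻¹) * K * K⁻¹ := by rw [key]
    _ = _ := by rw [Matrix.mul_nonsing_inv_cancel_right _ _ hInv]
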